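/- Let κ be a primitive from 𝒜 × ℬ to 𝒰 × 𝒱 that fails the completeness condition. Let R and S be finite-valued random variables on a probability space such that the pair (R,S) is trivial, let f : range(R) → 𝒜 and g : range(S) → ℬ be deterministic functions, set A = f ∘ R and B = g ∘ S, and let (U,V) be generated by one use of κ with inputs (A,B) and side information ⟨R,S⟩. Then the pair (⟨R,U⟩, ⟨S,V⟩) is trivial. -/

import Mathlib

/-!
Call a real matrix `p x y` a block product if rows and columns carry labels such that `p`
vanishes where the labels differ and factors as `α x * β y` where they agree. A pair `(X, Y)` is
trivial exactly when its joint law is a block product. Given a witness `Z`, the conditions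
`I[Z;X|Y] = I[Z;Y|X] = 0` force the conditional law of `Z` given `X = x` to equal that given
`Y = y` whenever `P(x, y) > 0`, so these conditional laws serve as labels, and `I[X;Y|Z] = 0`
supplies the factorisation. Conversely the label of `X` is a witness, since on the support it
is a function of `X` and of `Y`, and given it `X` and `Y` are independent.

The joint law of `(⟨R,U⟩, ⟨S,V⟩)` is `P(R = r, S = s) * κ(f r, g s)(u, v)`. The first factor is
a block product because `(R, S)` is trivial; the second, read as a matrix indexed by `(a, u)` and
`(b, v)`, is one because `κ` on uniform inputs yields a trivial pair. Block products are stable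
under relabelling rows and columns and under pointwise products.
-/

open MeasureTheory Real
open scoped ENNReal

namespace SecureComputation

variable {Ω : Type*} [MeasurableSpace Ω]

/-- The pair random variable `⟨X,Y⟩`. -/
def pair {𝒳 𝒴 : Type*} (X : Ω → 𝒳) (Y : Ω → 𝒴) : Ω → 𝒳 × 𝒴 := fun ω => (X ω, Y ω)

/-- Shannon entropy `H[X]` of a finite-valued random variable. -/
noncomputable def ent {𝒳 : Type*} (μ : Measure Ω) (X : Ω → 𝒳) : ℝ :=
  ∑' x : 𝒳, negMulLog ((μ (X ⁻¹' {x})).toReal)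

/-- Mutual information `I[X;Y]`. -/
noncomputable def mi {𝒳 𝒴 : Type*} (μ : Measure Ω) (X : Ω → 𝒳) (Y : Ω → 𝒴) : ℝ :=
  ent μ X + ent μ Y - ent μ (pair X Y)

/-- Conditional mutual information `I[X;Y|Z]`. -/
noncomputable def cmi {𝒳 𝒴 𝒵 : Type*} (μ : Measure Ω) (X : Ω → 𝒳) (Y : Ω → 𝒴)
    (Z : Ω → 𝒵) : ℝ :=
  ent μ (pair X Z) + ent μ (pair Y Z) - ent μ (pair (pair X Y) Z) - ent μ Z

/-- Conditional entropy `H[X|Y]`. -/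
noncomputable def condEnt {𝒳 𝒴 : Type*} (μ : Measure Ω) (X : Ω → 𝒳) (Y : Ω → 𝒴) : ℝ :=
  ent μ (pair X Y) - ent μ Y

/-- A finite-valued random variable: preimages of points are measurable. -/
def DiscreteRV {𝒳 : Type*} (X : Ω → 𝒳) : Prop := ∀ x, MeasurableSet (X ⁻¹' {x})

/-- The pair `(X,Y)` is trivial: some finite-valued `Z` on the same space has
`I[X;Y|Z] = 0`, `I[Z;X|Y] = 0`, `I[Z;Y|X] = 0`. -/
def IsTrivialPair {𝒳 𝒴 : Type*} (μ : Measure Ω) (X : Ω → 𝒳) (Y : Ω → 𝒴) : Prop :=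
  ∃ (𝒵 : Type) (_ : Fintype 𝒵) (Z : Ω → 𝒵), DiscreteRV Z ∧
    cmi μ X Y Z = 0 ∧ cmi μ Z X Y = 0 ∧ cmi μ Z Y X = 0

/-- `(U,V)` is generated by one use of the primitive `κ` with inputs `(A,B)` and
side information `T`. -/
def GeneratedBy {𝒜 ℬ 𝒰 𝒱 𝒯 : Type*} (μ : Measure Ω) (κ : 𝒜 × ℬ → PMF (𝒰 × 𝒱))
    (A : Ω → 𝒜) (B : Ω → ℬ) (U : Ω → 𝒰) (V : Ω → 𝒱) (T : Ω → 𝒯) : Prop :=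
  ∀ (t : 𝒯) (a : 𝒜) (b : ℬ) (u : 𝒰) (v : 𝒱),
    μ {ω | T ω = t ∧ A ω = a ∧ B ω = b ∧ U ω = u ∧ V ω = v} =
      μ {ω | T ω = t ∧ A ω = a ∧ B ω = b} * κ (a, b) (u, v)

/-- The primitive `κ` fails the completeness condition: whenever its inputs are
independent and uniformly distributed and `(U,V)` is generated by one use of `κ`
(with constant side information), the pair `(⟨A,U⟩, ⟨B,V⟩)` is trivial. -/
def FailsCompleteness {𝒜 ℬ 𝒰 𝒱 : Type} (κ : 𝒜 × ℬ → PMF (𝒰 × 𝒱)) : Prop :=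
  ∀ (Ω' : Type) (_ : MeasurableSpace Ω') (μ : Measure Ω'), IsProbabilityMeasure μ →
    ∀ (A : Ω' → 𝒜) (B : Ω' → ℬ) (U : Ω' → 𝒰) (V : Ω' → 𝒱),
      DiscreteRV A → DiscreteRV B → DiscreteRV U → DiscreteRV V →
      (∀ (a : 𝒜) (b : ℬ), μ {ω | A ω = a ∧ B ω = b} =
        ((Nat.card 𝒜 : ℝ≥0∞) * (Nat.card ℬ : ℝ≥0∞))⁻¹) →
      GeneratedBy μ κ A B U V (fun _ => ()) →
      IsTrivialPair μ (pair A U) (pair B V)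


open Finset InformationTheory

section Mass

variable {ι 𝒳 𝒴 𝒵 : Type*}

theorem sum_mul_log_div_eq_zero_iff [Fintype ι] {a b : ι → ℝ} (ha : ∀ i, 0 ≤ a i)
    (hb : ∀ i, 0 ≤ b i) (hab : ∀ i, b i = 0 → a i = 0) (hsum : ∑ i, a i = ∑ i, b i) :
    ∑ i, a i * log (a i / b i) = 0 ↔ a = b := by
  have key : ∀ i, a i * log (a i / b i) = b i * klFun (a i / b i) + (a i - b i) := by
    intro i
    rcases eq_or_ne (b i) 0 with h | h
    · simp [h, hab i h]
    · rw [klFun_apply]; field_simp; ring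
  have hnn : ∀ i ∈ univ, 0 ≤ b i * klFun (a i / b i) := fun i _ =>
    mul_nonneg (hb i) (klFun_nonneg (div_nonneg (ha i) (hb i)))
  simp only [key, sum_add_distrib, sum_sub_distrib, hsum, sub_self, add_zero,
    sum_eq_zero_iff_of_nonneg hnn, mem_univ, true_implies, funext_iff]
  refine forall_congr' fun i => ?_
  rcases eq_or_ne (b i) 0 with h | h
  · simp [h, hab i h]
  · rw [mul_eq_zero, klFun_eq_zero_iff (div_nonneg (ha i) (hb i)), div_eq_one_iff_eq h]
    simp [h]

lemma negMulLog_sum [Fintype ι] (f : ι → ℝ) :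
    negMulLog (∑ i, f i) = ∑ i, -f i * log (∑ j, f j) := by
  simp [negMulLog, sum_mul]

def CondIndepMass [Fintype 𝒳] [Fintype 𝒴] (t : 𝒳 → 𝒴 → 𝒵 → ℝ) : Prop :=
  ∀ x y z, t x y z * ∑ x', ∑ y', t x' y' z = (∑ y', t x y' z) * ∑ x', t x' y z

noncomputable def cmiOfMass [Fintype 𝒳] [Fintype 𝒴] [Fintype 𝒵] (t : 𝒳 → 𝒴 → 𝒵 → ℝ) : ℝ :=
  ∑ x, ∑ z, negMulLog (∑ y, t x y z) + ∑ y, ∑ z, negMulLog (∑ x, t x y z) -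
    ∑ x, ∑ y, ∑ z, negMulLog (t x y z) - ∑ z, negMulLog (∑ x, ∑ y, t x y z)

noncomputable def markovMass [Fintype 𝒳] [Fintype 𝒴] (t : 𝒳 → 𝒴 → 𝒵 → ℝ) (x : 𝒳) (y : 𝒴)
    (z : 𝒵) : ℝ :=
  (∑ y', t x y' z) * (∑ x', t x' y z) / ∑ x', ∑ y', t x' y' z

variable {t : 𝒳 → 𝒴 → 𝒵 → ℝ}

lemma le_sum_snd [Fintype 𝒴] (ht : ∀ x y z, 0 ≤ t x y z) (x : 𝒳) (y : 𝒴) (z : 𝒵) :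
    t x y z ≤ ∑ y', t x y' z :=
  single_le_sum (fun y' _ => ht x y' z) (mem_univ y)

lemma le_sum_fst [Fintype 𝒳] (ht : ∀ x y z, 0 ≤ t x y z) (x : 𝒳) (y : 𝒴) (z : 𝒵) :
    t x y z ≤ ∑ x', t x' y z :=
  single_le_sum (fun x' _ => ht x' y z) (mem_univ x)

lemma sum_snd_le_sum_sum [Fintype 𝒳] [Fintype 𝒴] (ht : ∀ x y z, 0 ≤ t x y z) (x : 𝒳) (z : 𝒵) :
    ∑ y, t x y z ≤ ∑ x', ∑ y, t x' y z :=
  single_le_sum (fun x' _ => sum_nonneg fun y _ => ht x' y z) (mem_univ x)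

lemma cmiOfMass_eq_sum_mul_log [Fintype 𝒳] [Fintype 𝒴] [Fintype 𝒵]
    (ht : ∀ x y z, 0 ≤ t x y z) :
    cmiOfMass t = ∑ x, ∑ y, ∑ z, t x y z * log (t x y z / markovMass t x y z) := by
  have hXZ : ∑ x, ∑ z, negMulLog (∑ y, t x y z) =
      ∑ x, ∑ y, ∑ z, -t x y z * log (∑ y', t x y' z) := by
    simp only [negMulLog_sum]; exact sum_congr rfl fun x _ => sum_comm
  have hYZ : ∑ y, ∑ z, negMulLog (∑ x, t x y z) =
      ∑ x, ∑ y, ∑ z, -t x y z * log (∑ x', t x' y z) := by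
    simp only [negMulLog_sum]
    exact (sum_congr rfl fun _ _ => sum_comm).trans sum_comm
  have hZ : ∑ z, negMulLog (∑ x, ∑ y, t x y z) =
      ∑ x, ∑ y, ∑ z, -t x y z * log (∑ x', ∑ y', t x' y' z) := by
    simp only [negMulLog_sum, neg_mul, sum_neg_distrib, sum_mul]
    exact congrArg _ (sum_comm.trans (sum_congr rfl fun _ _ => sum_comm))
  rw [cmiOfMass, hXZ, hYZ, hZ, ← sum_add_distrib, ← sum_sub_distrib, ← sum_sub_distrib]
  refine sum_congr rfl fun x _ => ?_
  rw [← sum_add_distrib, ← sum_sub_distrib, ← sum_sub_distrib]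
  refine sum_congr rfl fun y _ => ?_
  rw [← sum_add_distrib, ← sum_sub_distrib, ← sum_sub_distrib]
  refine sum_congr rfl fun z _ => ?_
  rcases (ht x y z).eq_or_lt with h | h
  · simp [← h]
  have hXZ := h.trans_le (le_sum_snd ht x y z)
  have hYZ := h.trans_le (le_sum_fst ht x y z)
  have hZ := hXZ.trans_le (sum_snd_le_sum_sum ht x z)
  rw [markovMass, log_div h.ne' (by positivity), log_div (by positivity) hZ.ne',
    log_mul hXZ.ne' hYZ.ne', negMulLog]
  ring

lemma sum_markovMass [Fintype 𝒳] [Fintype 𝒴] [Fintype 𝒵] :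
    ∑ x, ∑ y, ∑ z, markovMass t x y z = ∑ x, ∑ y, ∑ z, t x y z := by
  have hZ : ∀ z, ∑ x, ∑ y, markovMass t x y z = ∑ x, ∑ y, t x y z := fun z => by
    simp only [markovMass, div_eq_mul_inv, ← sum_mul, ← mul_sum]
    rw [sum_comm (f := fun y x => t x y z)]
    exact mul_self_mul_inv _
  have hswap : ∀ F : 𝒳 → 𝒴 → 𝒵 → ℝ, ∑ x, ∑ y, ∑ z, F x y z = ∑ z, ∑ x, ∑ y, F x y z :=
    fun F => (sum_congr rfl fun _ _ => sum_comm).trans sum_comm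
  rw [hswap, hswap]
  exact sum_congr rfl fun z _ => hZ z

lemma condIndepMass_iff_eq_markovMass [Fintype 𝒳] [Fintype 𝒴] (ht : ∀ x y z, 0 ≤ t x y z) :
    CondIndepMass t ↔ ∀ x y z, t x y z = markovMass t x y z := by
  refine forall₃_congr fun x y z => ?_
  rcases eq_or_ne (∑ x', ∑ y', t x' y' z) 0 with h | h
  · have hXZ : ∑ y', t x y' z = 0 :=
      le_antisymm (h ▸ sum_snd_le_sum_sum ht x z) (sum_nonneg fun y' _ => ht x y' z)
    have hXYZ : t x y z = 0 := le_antisymm (hXZ ▸ le_sum_snd ht x y z) (ht x y z)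
    simp [markovMass, h, hXZ, hXYZ]
  · rw [markovMass, eq_div_iff h]

theorem cmiOfMass_eq_zero_iff [Fintype 𝒳] [Fintype 𝒴] [Fintype 𝒵] (ht : ∀ x y z, 0 ≤ t x y z) :
    cmiOfMass t = 0 ↔ CondIndepMass t := by
  have hpos : ∀ x y z, t x y z ≠ 0 → markovMass t x y z ≠ 0 := fun x y z h => by
    have h := (ht x y z).lt_of_ne' h
    have hXZ := h.trans_le (le_sum_snd ht x y z)
    have hYZ := h.trans_le (le_sum_fst ht x y z)
    have hZ := hXZ.trans_le (sum_snd_le_sum_sum ht x z)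
    exact (div_pos (mul_pos hXZ hYZ) hZ).ne'
  have := sum_mul_log_div_eq_zero_iff (a := fun i : 𝒳 × 𝒴 × 𝒵 => t i.1 i.2.1 i.2.2)
    (b := fun i => markovMass t i.1 i.2.1 i.2.2) (fun i => ht _ _ _) ?_ ?_ ?_
  · simpa only [Fintype.sum_prod_type, funext_iff, Prod.forall, ← cmiOfMass_eq_sum_mul_log ht,
      ← condIndepMass_iff_eq_markovMass ht] using this
  · rintro ⟨x, y, z⟩
    exact div_nonneg (mul_nonneg (sum_nonneg fun _ _ => ht _ _ _)
      (sum_nonneg fun _ _ => ht _ _ _)) (sum_nonneg fun _ _ => sum_nonneg fun _ _ => ht _ _ _)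
  · rintro ⟨x, y, z⟩; exact not_imp_not.mp (hpos x y z)
  · simp only [Fintype.sum_prod_type, sum_markovMass]

lemma condIndepMass_of_eq_mul [Fintype 𝒳] [Fintype 𝒴] {a : 𝒳 → 𝒵 → ℝ} {b : 𝒴 → 𝒵 → ℝ}
    (h : ∀ x y z, t x y z = a x z * b y z) : CondIndepMass t := by
  intro x y z
  simp only [h, ← sum_mul, ← mul_sum]
  ring

lemma condIndepMass_of_eq_ite [Fintype 𝒳] [Fintype 𝒵] [DecidableEq 𝒵] {g : 𝒴 → 𝒵}
    {q : 𝒳 → 𝒴 → ℝ} (h : ∀ x y z, t x y z = if g y = z then q x y else 0) :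
    CondIndepMass fun z x y => t x y z := by
  intro z x y
  simp only [h]
  split_ifs with hz
  · subst hz; simp [mul_comm]
  · simp

noncomputable def condLawFst [Fintype 𝒴] [Fintype 𝒵] (t : 𝒳 → 𝒴 → 𝒵 → ℝ) (x : 𝒳) (z : 𝒵) :
    ℝ :=
  (∑ y, t x y z) / ∑ z', ∑ y, t x y z'

noncomputable def condLawSnd [Fintype 𝒳] [Fintype 𝒵] (t : 𝒳 → 𝒴 → 𝒵 → ℝ) (y : 𝒴) (z : 𝒵) :
    ℝ :=
  (∑ x, t x y z) / ∑ z', ∑ x, t x y z'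

lemma mul_condLawFst [Fintype 𝒴] [Fintype 𝒵] (ht : ∀ x y z, 0 ≤ t x y z) (x : 𝒳) (z : 𝒵) :
    (∑ z', ∑ y, t x y z') * condLawFst t x z = ∑ y, t x y z :=
  mul_div_cancel_of_imp' fun h => le_antisymm
    (h ▸ single_le_sum (fun z' _ => sum_nonneg fun y _ => ht x y z') (mem_univ z))
    (sum_nonneg fun y _ => ht x y z)

lemma mul_condLawSnd [Fintype 𝒳] [Fintype 𝒵] (ht : ∀ x y z, 0 ≤ t x y z) (y : 𝒴) (z : 𝒵) :
    (∑ z', ∑ x, t x y z') * condLawSnd t y z = ∑ x, t x y z :=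
  mul_div_cancel_of_imp' fun h => le_antisymm
    (h ▸ single_le_sum (fun z' _ => sum_nonneg fun x _ => ht x y z') (mem_univ z))
    (sum_nonneg fun x _ => ht x y z)

lemma condLawFst_eq_condLawSnd [Fintype 𝒳] [Fintype 𝒴] [Fintype 𝒵] (ht : ∀ x y z, 0 ≤ t x y z)
    (hZX : CondIndepMass fun z x y => t x y z) (hZY : CondIndepMass fun z y x => t x y z)
    {x : 𝒳} {y : 𝒴} (hxy : ∑ z, t x y z ≠ 0) : condLawFst t x = condLawSnd t y := by
  ext z
  have hp : 0 < ∑ z, t x y z := (sum_nonneg fun z _ => ht x y z).lt_of_ne' hxy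
  have hX : 0 < ∑ z', ∑ y', t x y' z' := hp.trans_le (sum_le_sum fun z _ => le_sum_snd ht x y z)
  have hY : 0 < ∑ z', ∑ x', t x' y z' := hp.trans_le (sum_le_sum fun z _ => le_sum_fst ht x y z)
  calc condLawFst t x z = t x y z / ∑ z, t x y z :=
        (div_eq_div_iff hX.ne' hxy).2 (hZY z y x).symm
    _ = condLawSnd t y z := ((div_eq_div_iff hY.ne' hxy).2 (hZX z x y).symm).symm

lemma sum_eq_mul_sum_condLaw [Fintype 𝒳] [Fintype 𝒴] [Fintype 𝒵] (ht : ∀ x y z, 0 ≤ t x y z)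
    (hXY : CondIndepMass t) (x : 𝒳) (y : 𝒴) :
    ∑ z, t x y z = (∑ z, ∑ y', t x y' z) * (∑ z, ∑ x', t x' y z) *
      ∑ z, condLawFst t x z * condLawSnd t y z / ∑ x', ∑ y', t x' y' z := by
  rw [mul_sum]
  refine sum_congr rfl fun z _ => ?_
  rcases eq_or_ne (∑ x', ∑ y', t x' y' z) 0 with h | h
  · rw [h, div_zero, mul_zero]
    exact le_antisymm (h ▸ (le_sum_snd ht x y z).trans (sum_snd_le_sum_sum ht x z)) (ht x y z)
  · rw [(eq_div_iff h).2 (hXY x y z), ← mul_condLawFst ht x z, ← mul_condLawSnd ht y z]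
    ring

end Mass

section BlockProduct

variable {𝒳 𝒴 𝒳' 𝒴' : Type*}

def IsBlockProduct (p : 𝒳 → 𝒴 → ℝ) : Prop :=
  ∃ (𝒦 : Type) (φ : 𝒳 → 𝒦) (ψ : 𝒴 → 𝒦) (α : 𝒳 → ℝ) (β : 𝒴 → ℝ), ∀ x y,
    (φ x = ψ y → p x y = α x * β y) ∧ (φ x ≠ ψ y → p x y = 0)

lemma IsBlockProduct.comp {p : 𝒳 → 𝒴 → ℝ} (hp : IsBlockProduct p) (F : 𝒳' → 𝒳) (G : 𝒴' → 𝒴) :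
    IsBlockProduct fun x y => p (F x) (G y) := by
  obtain ⟨𝒦, φ, ψ, α, β, h⟩ := hp
  exact ⟨𝒦, φ ∘ F, ψ ∘ G, α ∘ F, β ∘ G, fun x y => h (F x) (G y)⟩

lemma IsBlockProduct.mul {p q : 𝒳 → 𝒴 → ℝ} (hp : IsBlockProduct p) (hq : IsBlockProduct q) :
    IsBlockProduct fun x y => p x y * q x y := by
  obtain ⟨𝒦, φ, ψ, α, β, hp⟩ := hp
  obtain ⟨𝒦', φ', ψ', α', β', hq⟩ := hq
  refine ⟨𝒦 × 𝒦', fun x => (φ x, φ' x), fun y => (ψ y, ψ' y), fun x => α x * α' x,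
    fun y => β y * β' y, fun x y => ⟨fun h => ?_, fun h => ?_⟩⟩
  · obtain ⟨h, h'⟩ := Prod.mk.inj h
    dsimp only
    rw [(hp x y).1 h, (hq x y).1 h']
    ring
  · dsimp only
    by_cases h' : φ x = ψ y
    · rw [(hq x y).2 fun h'' => h (Prod.ext h' h''), mul_zero]
    · rw [(hp x y).2 h', zero_mul]

lemma IsBlockProduct.const_mul {p : 𝒳 → 𝒴 → ℝ} (hp : IsBlockProduct p) (c : ℝ) :
    IsBlockProduct fun x y => c * p x y := by
  obtain ⟨𝒦, φ, ψ, α, β, h⟩ := hp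
  refine ⟨𝒦, φ, ψ, fun x => c * α x, β, fun x y => ⟨fun hxy => ?_, fun hxy => ?_⟩⟩
  · simp only [(h x y).1 hxy, mul_assoc]
  · simp only [(h x y).2 hxy, mul_zero]

lemma exists_fintype_labels {𝒦 : Type} [Finite 𝒳] (φ : 𝒳 → 𝒦) (ψ : 𝒴 → 𝒦) :
    ∃ (𝒦' : Type) (_ : Fintype 𝒦') (φ' : 𝒳 → 𝒦') (ψ' : 𝒴 → 𝒦'),
      ∀ x y, φ' x = ψ' y ↔ φ x = ψ y := by
  classical
  have := Fintype.ofFinite 𝒳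
  refine ⟨Option (Set.range φ), inferInstance, fun x => some (Set.rangeFactorization φ x),
    fun y => if hy : ψ y ∈ Set.range φ then some ⟨ψ y, hy⟩ else none, fun x y => ?_⟩
  dsimp only
  split_ifs with hy
  · simp [Set.rangeFactorization, Subtype.ext_iff]
  · simp only [false_iff]
    exact fun hxy => hy ⟨x, hxy⟩

theorem isBlockProduct_sum_of_condIndepMass {𝒵 : Type} [Fintype 𝒳] [Fintype 𝒴] [Fintype 𝒵]
    {t : 𝒳 → 𝒴 → 𝒵 → ℝ} (ht : ∀ x y z, 0 ≤ t x y z) (hXY : CondIndepMass t)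
    (hZX : CondIndepMass fun z x y => t x y z) (hZY : CondIndepMass fun z y x => t x y z) :
    IsBlockProduct fun x y => ∑ z, t x y z := by
  refine ⟨𝒵 → ℝ, condLawFst t, condLawSnd t,
    fun x => (∑ z, ∑ y, t x y z) *
      ∑ z, condLawFst t x z * condLawFst t x z / ∑ x', ∑ y', t x' y' z,
    fun y => ∑ z, ∑ x, t x y z, fun x y => ⟨fun h => ?_, fun h => ?_⟩⟩
  · dsimp only
    rw [sum_eq_mul_sum_condLaw ht hXY, ← h]
    ring
  · by_contra hne
    exact h (condLawFst_eq_condLawSnd ht hZX hZY hne)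

end BlockProduct

section RandomVariables

variable {𝒳 𝒴 𝒵 : Type*}

lemma pair_preimage_singleton {α : Type*} (X : α → 𝒳) (Y : α → 𝒴) (x : 𝒳) (y : 𝒴) :
    pair X Y ⁻¹' {(x, y)} = X ⁻¹' {x} ∩ Y ⁻¹' {y} := by
  ext; simp [pair]

lemma DiscreteRV.pair {X : Ω → 𝒳} {Y : Ω → 𝒴} (hX : DiscreteRV X) (hY : DiscreteRV Y) :
    DiscreteRV (pair X Y) := fun ⟨x, y⟩ => by
  rw [pair_preimage_singleton]; exact (hX x).inter (hY y)

lemma DiscreteRV.comp [Countable 𝒳] {X : Ω → 𝒳} (hX : DiscreteRV X) (φ : 𝒳 → 𝒴) :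
    DiscreteRV (φ ∘ X) := fun y => by
  rw [Set.preimage_comp, ← Set.biUnion_preimage_singleton]
  exact .biUnion (Set.to_countable _) fun x _ => hX x

variable (μ : Measure Ω)

lemma ent_eq_sum [Fintype 𝒳] (X : Ω → 𝒳) :
    ent μ X = ∑ x, negMulLog (μ.real (X ⁻¹' {x})) :=
  tsum_fintype _

lemma sum_measureReal_inter_preimage [IsFiniteMeasure μ] [Fintype 𝒴] {Y : Ω → 𝒴}
    (hY : DiscreteRV Y) (s : Set Ω) : ∑ y, μ.real (s ∩ Y ⁻¹' {y}) = μ.real s := by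
  simp_rw [Set.inter_comm s, ← measureReal_restrict_apply (hY _)]
  rw [sum_measureReal_preimage_singleton _ fun y _ => hY y]
  simp

lemma sum_measureReal_preimage_inter [IsFiniteMeasure μ] [Fintype 𝒴] {Y : Ω → 𝒴}
    (hY : DiscreteRV Y) (s : Set Ω) : ∑ y, μ.real (Y ⁻¹' {y} ∩ s) = μ.real s := by
  simp only [Set.inter_comm _ s, sum_measureReal_inter_preimage μ hY]

noncomputable def jointMass (X : Ω → 𝒳) (Y : Ω → 𝒴) (Z : Ω → 𝒵) (x : 𝒳) (y : 𝒴) (z : 𝒵) :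
    ℝ :=
  μ.real (X ⁻¹' {x} ∩ Y ⁻¹' {y} ∩ Z ⁻¹' {z})

variable {μ}

lemma jointMass_nonneg (X : Ω → 𝒳) (Y : Ω → 𝒴) (Z : Ω → 𝒵) (x : 𝒳) (y : 𝒴) (z : 𝒵) :
    0 ≤ jointMass μ X Y Z x y z :=
  measureReal_nonneg

lemma jointMass_rotate (X : Ω → 𝒳) (Y : Ω → 𝒴) (Z : Ω → 𝒵) :
    jointMass μ Z X Y = fun z x y => jointMass μ X Y Z x y z := by
  ext z x y; simp only [jointMass]; congr 1; ac_rfl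

lemma jointMass_reverse (X : Ω → 𝒳) (Y : Ω → 𝒴) (Z : Ω → 𝒵) :
    jointMass μ Z Y X = fun z y x => jointMass μ X Y Z x y z := by
  ext z y x; simp only [jointMass]; congr 1; ac_rfl

lemma jointMass_comp_fst [DecidableEq 𝒵] (X : Ω → 𝒳) (Y : Ω → 𝒴) (φ : 𝒳 → 𝒵) (x : 𝒳)
    (y : 𝒴) (z : 𝒵) : jointMass μ X Y (φ ∘ X) x y z =
      if φ x = z then μ.real (X ⁻¹' {x} ∩ Y ⁻¹' {y}) else 0 := by
  rw [jointMass]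
  split_ifs with h
  · congr 1
    exact Set.inter_eq_left.2 fun ω hω => by simp_all
  · refine (congrArg μ.real (Set.eq_empty_of_forall_notMem fun ω hω => h ?_)).trans
      measureReal_empty
    simp only [Set.mem_inter_iff, Set.mem_preimage, Set.mem_singleton_iff, Function.comp]
      at hω
    exact hω.1.1 ▸ hω.2

variable [IsFiniteMeasure μ] {X : Ω → 𝒳} {Y : Ω → 𝒴} {Z : Ω → 𝒵}

lemma sum_jointMass_fst [Fintype 𝒳] (hX : DiscreteRV X) (y : 𝒴) (z : 𝒵) :
    ∑ x, jointMass μ X Y Z x y z = μ.real (Y ⁻¹' {y} ∩ Z ⁻¹' {z}) := by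
  simp only [← sum_measureReal_inter_preimage μ hX (Y ⁻¹' {y} ∩ Z ⁻¹' {z}), jointMass]
  congr! 2; ac_rfl

lemma sum_jointMass_snd [Fintype 𝒴] (hY : DiscreteRV Y) (x : 𝒳) (z : 𝒵) :
    ∑ y, jointMass μ X Y Z x y z = μ.real (X ⁻¹' {x} ∩ Z ⁻¹' {z}) := by
  simp only [← sum_measureReal_inter_preimage μ hY (X ⁻¹' {x} ∩ Z ⁻¹' {z}), jointMass]
  congr! 2; ac_rfl

lemma sum_jointMass_thd [Fintype 𝒵] (hZ : DiscreteRV Z) (x : 𝒳) (y : 𝒴) :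
    ∑ z, jointMass μ X Y Z x y z = μ.real (X ⁻¹' {x} ∩ Y ⁻¹' {y}) :=
  sum_measureReal_inter_preimage μ hZ _

end RandomVariables

section Triviality

variable {𝒳 𝒴 𝒵 : Type*} {μ : Measure Ω} [IsFiniteMeasure μ]
  {X : Ω → 𝒳} {Y : Ω → 𝒴} {Z : Ω → 𝒵}

lemma cmi_eq_cmiOfMass [Fintype 𝒳] [Fintype 𝒴] [Fintype 𝒵] (hX : DiscreteRV X)
    (hY : DiscreteRV Y) : cmi μ X Y Z = cmiOfMass (jointMass μ X Y Z) := by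
  simp only [cmi, cmiOfMass, ent_eq_sum, Fintype.sum_prod_type, pair_preimage_singleton,
    sum_jointMass_fst hX, sum_jointMass_snd hY, sum_measureReal_preimage_inter μ hX]
  rfl

theorem cmi_eq_zero_iff [Fintype 𝒳] [Fintype 𝒴] [Fintype 𝒵] (hX : DiscreteRV X)
    (hY : DiscreteRV Y) : cmi μ X Y Z = 0 ↔ CondIndepMass (jointMass μ X Y Z) := by
  rw [cmi_eq_cmiOfMass hX hY, cmiOfMass_eq_zero_iff (jointMass_nonneg X Y Z)]

theorem isTrivialPair_iff_condIndepMass [Fintype 𝒳] [Fintype 𝒴] (hX : DiscreteRV X)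
    (hY : DiscreteRV Y) :
    IsTrivialPair μ X Y ↔ ∃ (𝒵 : Type) (_ : Fintype 𝒵) (Z : Ω → 𝒵), DiscreteRV Z ∧
      CondIndepMass (jointMass μ X Y Z) ∧ CondIndepMass (fun z x y => jointMass μ X Y Z x y z) ∧
      CondIndepMass (fun z y x => jointMass μ X Y Z x y z) := by
  refine exists_congr fun 𝒵 => exists_congr fun _ => exists_congr fun Z =>
    and_congr_right fun hZ => ?_
  rw [cmi_eq_zero_iff hX hY, cmi_eq_zero_iff hZ hX, cmi_eq_zero_iff hZ hY,
    jointMass_rotate X Y Z, jointMass_reverse X Y Z]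

theorem IsTrivialPair.isBlockProduct [Fintype 𝒳] [Fintype 𝒴] (hX : DiscreteRV X)
    (hY : DiscreteRV Y) (h : IsTrivialPair μ X Y) :
    IsBlockProduct fun x y => μ.real (X ⁻¹' {x} ∩ Y ⁻¹' {y}) := by
  obtain ⟨𝒵, _, Z, hZ, hXY, hZX, hZY⟩ := (isTrivialPair_iff_condIndepMass hX hY).1 h
  simpa only [sum_jointMass_thd hZ] using
    isBlockProduct_sum_of_condIndepMass (jointMass_nonneg X Y Z) hXY hZX hZY

theorem IsBlockProduct.isTrivialPair [Fintype 𝒳] [Fintype 𝒴] (hX : DiscreteRV X)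
    (hY : DiscreteRV Y) (h : IsBlockProduct fun x y => μ.real (X ⁻¹' {x} ∩ Y ⁻¹' {y})) :
    IsTrivialPair μ X Y := by
  classical
  obtain ⟨𝒦₀, φ₀, ψ₀, α, β, hp⟩ := h
  obtain ⟨𝒦, _, φ, ψ, hφψ⟩ := exists_fintype_labels φ₀ ψ₀
  replace hp : ∀ x y, (φ x = ψ y → μ.real (X ⁻¹' {x} ∩ Y ⁻¹' {y}) = α x * β y) ∧
      (φ x ≠ ψ y → μ.real (X ⁻¹' {x} ∩ Y ⁻¹' {y}) = 0) := fun x y => by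
    simpa only [ne_eq, hφψ] using hp x y
  have ht := jointMass_comp_fst (μ := μ) X Y φ
  have htY : ∀ x y k, jointMass μ X Y (φ ∘ X) x y k =
      if ψ y = k then μ.real (X ⁻¹' {x} ∩ Y ⁻¹' {y}) else 0 := fun x y k => by
    rw [ht]
    by_cases hxy : φ x = ψ y
    · rw [hxy]
    · simp [(hp x y).2 hxy]
  have htXY : ∀ x y k, jointMass μ X Y (φ ∘ X) x y k =
      (if φ x = k then α x else 0) * (if ψ y = k then β y else 0) := fun x y k => by
    rw [ht]
    split_ifs with h₁ h₂ h₂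
    · exact (hp x y).1 (h₁.trans h₂.symm)
    · rw [mul_zero]; exact (hp x y).2 fun h => h₂ (h ▸ h₁)
    · rw [zero_mul]
    · rw [zero_mul]
  rw [isTrivialPair_iff_condIndepMass hX hY]
  exact ⟨𝒦, inferInstance, φ ∘ X, hX.comp φ, condIndepMass_of_eq_mul htXY,
    condIndepMass_of_eq_ite htY,
    condIndepMass_of_eq_ite (t := fun y x k => jointMass μ X Y (φ ∘ X) x y k) fun y x k => ht x y k⟩

theorem isTrivialPair_iff_isBlockProduct [Fintype 𝒳] [Fintype 𝒴] (hX : DiscreteRV X)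
    (hY : DiscreteRV Y) :
    IsTrivialPair μ X Y ↔ IsBlockProduct fun x y => μ.real (X ⁻¹' {x} ∩ Y ⁻¹' {y}) :=
  ⟨IsTrivialPair.isBlockProduct hX hY, IsBlockProduct.isTrivialPair hX hY⟩

end Triviality

section Primitive

variable {𝒜 ℬ 𝒰 𝒱 : Type} [Fintype 𝒜] [Fintype ℬ] [Nonempty 𝒜] [Nonempty ℬ]

noncomputable def uniformInputLaw (κ : 𝒜 × ℬ → PMF (𝒰 × 𝒱)) : PMF ((𝒜 × ℬ) × (𝒰 × 𝒱)) :=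
  (PMF.uniformOfFintype (𝒜 × ℬ)).bind fun ab => (κ ab).map (Prod.mk ab)

lemma uniformInputLaw_apply [Fintype 𝒰] [Fintype 𝒱] (κ : 𝒜 × ℬ → PMF (𝒰 × 𝒱)) (ab : 𝒜 × ℬ)
    (uv : 𝒰 × 𝒱) :
    uniformInputLaw κ (ab, uv) = ((Nat.card 𝒜 : ℝ≥0∞) * Nat.card ℬ)⁻¹ * κ ab uv := by
  classical
  simp [uniformInputLaw, PMF.bind_apply, PMF.map_apply, tsum_fintype, ite_and,
    Finset.sum_ite_irrel]

lemma map_fst_uniformInputLaw (κ : 𝒜 × ℬ → PMF (𝒰 × 𝒱)) :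
    (uniformInputLaw κ).map Prod.fst = PMF.uniformOfFintype (𝒜 × ℬ) := by
  simp only [uniformInputLaw, PMF.map_bind, PMF.map_comp, Function.comp_def]
  exact (congrArg _ (funext fun ab => PMF.map_const (κ ab) ab)).trans (PMF.bind_pure _)

theorem FailsCompleteness.isBlockProduct [Fintype 𝒰] [Fintype 𝒱] {κ : 𝒜 × ℬ → PMF (𝒰 × 𝒱)}
    (hκ : FailsCompleteness κ) :
    IsBlockProduct fun (au : 𝒜 × 𝒰) (bv : ℬ × 𝒱) => (κ (au.1, bv.1) (au.2, bv.2)).toReal := by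
  let _ : MeasurableSpace (𝒜 × ℬ) := ⊤
  let _ : MeasurableSpace ((𝒜 × ℬ) × (𝒰 × 𝒱)) := ⊤
  set c : ℝ≥0∞ := ((Nat.card 𝒜 : ℝ≥0∞) * Nat.card ℬ)⁻¹
  set μ := (uniformInputLaw κ).toMeasure
  have hdisc : ∀ {𝒳 : Type} (X : (𝒜 × ℬ) × (𝒰 × 𝒱) → 𝒳), DiscreteRV X :=
    fun _ _ => MeasurableSpace.measurableSet_top
  have hpoint : ∀ a b u v, μ {((a, b), (u, v))} = c * κ (a, b) (u, v) := fun a b u v => by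
    rw [PMF.toMeasure_apply_singleton _ _ MeasurableSpace.measurableSet_top,
      uniformInputLaw_apply]
  have hinput : ∀ a b, μ {ω | ω.1.1 = a ∧ ω.1.2 = b} = c := fun a b => by
    have : {ω : (𝒜 × ℬ) × (𝒰 × 𝒱) | ω.1.1 = a ∧ ω.1.2 = b} = Prod.fst ⁻¹' {(a, b)} := by
      ext; simp [Prod.ext_iff]
    rw [this, ← PMF.toMeasure_map_apply _ _ _ (fun _ _ => MeasurableSpace.measurableSet_top)
      MeasurableSpace.measurableSet_top, map_fst_uniformInputLaw,
      PMF.toMeasure_apply_singleton _ _ MeasurableSpace.measurableSet_top]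
    simp [c, Nat.card_eq_fintype_card]
  have htriv := hκ _ ⊤ μ inferInstance (fun ω => ω.1.1) (fun ω => ω.1.2) (fun ω => ω.2.1)
    (fun ω => ω.2.2) (hdisc _) (hdisc _) (hdisc _) (hdisc _) hinput fun _ a b u v => by
      have : {ω : (𝒜 × ℬ) × (𝒰 × 𝒱) | ω.1.1 = a ∧ ω.1.2 = b ∧ ω.2.1 = u ∧ ω.2.2 = v} =
          {((a, b), (u, v))} := by
        ext; simp [Prod.ext_iff, and_assoc]
      simp only [true_and, this, hpoint, hinput]
  have hc : c.toReal ≠ 0 := by simp [c]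
  convert (htriv.isBlockProduct (hdisc _) (hdisc _)).const_mul c.toReal⁻¹ using 3 with au bv
  have : pair (fun ω => ω.1.1) (fun ω => ω.2.1) ⁻¹' {au} ∩
      pair (fun ω => ω.1.2) (fun ω => ω.2.2) ⁻¹' {bv} = {((au.1, bv.1), (au.2, bv.2))} := by
    ext; simp [pair, Prod.ext_iff]; tauto
  rw [this, measureReal_def, hpoint, ENNReal.toReal_mul, inv_mul_cancel_left₀ hc]

end Primitive

lemma GeneratedBy.measureReal_inter_preimage_pair {μ : Measure Ω} {𝓡 𝓢 𝒜 ℬ 𝒰 𝒱 : Type*}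
    {κ : 𝒜 × ℬ → PMF (𝒰 × 𝒱)} {R : Ω → 𝓡} {S : Ω → 𝓢} {f : 𝓡 → 𝒜} {g : 𝓢 → ℬ}
    {U : Ω → 𝒰} {V : Ω → 𝒱}
    (hgen : GeneratedBy μ κ (fun ω => f (R ω)) (fun ω => g (S ω)) U V (pair R S))
    (ru : 𝓡 × 𝒰) (sv : 𝓢 × 𝒱) :
    μ.real (pair R U ⁻¹' {ru} ∩ pair S V ⁻¹' {sv}) =
      μ.real (R ⁻¹' {ru.1} ∩ S ⁻¹' {sv.1}) * (κ (f ru.1, g sv.1) (ru.2, sv.2)).toReal := by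
  obtain ⟨r, u⟩ := ru
  obtain ⟨s, v⟩ := sv
  have h₁ : pair R U ⁻¹' {(r, u)} ∩ pair S V ⁻¹' {(s, v)} = {ω | pair R S ω = (r, s) ∧
      f (R ω) = f r ∧ g (S ω) = g s ∧ U ω = u ∧ V ω = v} := by
    ext; simp only [pair, Set.mem_inter_iff, Set.mem_preimage, Set.mem_singleton_iff,
      Set.mem_ofPred_eq, Prod.mk.injEq]; aesop
  have h₂ : R ⁻¹' {r} ∩ S ⁻¹' {s} =
      {ω | pair R S ω = (r, s) ∧ f (R ω) = f r ∧ g (S ω) = g s} := by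
    ext; simp only [pair, Set.mem_inter_iff, Set.mem_preimage, Set.mem_singleton_iff,
      Set.mem_ofPred_eq, Prod.mk.injEq]; aesop
  simp only [measureReal_def, h₁, h₂, hgen (r, s) (f r) (g s) u v, ENNReal.toReal_mul]

theorem stmt9_general {Ω : Type*} [MeasurableSpace Ω] (μ : Measure Ω) [IsProbabilityMeasure μ]
    {𝓡 𝓢 𝒜 ℬ 𝒰 𝒱 : Type} [Fintype 𝓡] [Fintype 𝓢]
    [Fintype 𝒜] [Fintype ℬ] [Fintype 𝒰] [Fintype 𝒱]
    [Nonempty 𝒜] [Nonempty ℬ]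
    (κ : 𝒜 × ℬ → PMF (𝒰 × 𝒱)) (hκ : FailsCompleteness κ)
    (R : Ω → 𝓡) (S : Ω → 𝓢) (hR : DiscreteRV R) (hS : DiscreteRV S)
    (htriv : IsTrivialPair μ R S) (f : 𝓡 → 𝒜) (g : 𝓢 → ℬ)
    (U : Ω → 𝒰) (V : Ω → 𝒱) (hU : DiscreteRV U) (hV : DiscreteRV V)
    (hgen : GeneratedBy μ κ (fun ω => f (R ω)) (fun ω => g (S ω)) U V (pair R S)) :
    IsTrivialPair μ (pair R U) (pair S V) := by
  rw [isTrivialPair_iff_isBlockProduct (hR.pair hU) (hS.pair hV)]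
  simp only [hgen.measureReal_inter_preimage_pair]
  exact ((htriv.isBlockProduct hR hS).comp Prod.fst Prod.fst).mul
    (hκ.isBlockProduct.comp (fun ru : 𝓡 × 𝒰 => (f ru.1, ru.2)) fun sv : 𝓢 × 𝒱 => (g sv.1, sv.2))

/-- If a primitive `κ` fails the completeness condition, `(R,S)` is trivial, and `(U,V)` is
generated by one use of `κ` with inputs `(f∘R, g∘S)` and side information `⟨R,S⟩`, then the
pair `(⟨R,U⟩, ⟨S,V⟩)` is trivial. -/
theorem stmt9 {Ω : Type*} [MeasurableSpace Ω] (μ : Measure Ω) [IsProbabilityMeasure μ]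
    {𝓡 𝓢 𝒜 ℬ 𝒰 𝒱 : Type} [Fintype 𝓡] [Fintype 𝓢]
    [Fintype 𝒜] [Fintype ℬ] [Fintype 𝒰] [Fintype 𝒱]
    [Nonempty 𝓡] [Nonempty 𝓢] [Nonempty 𝒜] [Nonempty ℬ] [Nonempty 𝒰] [Nonempty 𝒱]
    (κ : 𝒜 × ℬ → PMF (𝒰 × 𝒱)) (hκ : FailsCompleteness κ)
    (R : Ω → 𝓡) (S : Ω → 𝓢) (hR : DiscreteRV R) (hS : DiscreteRV S)
    (htriv : IsTrivialPair μ R S) (f : 𝓡 → 𝒜) (g : 𝓢 → ℬ)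
    (U : Ω → 𝒰) (V : Ω → 𝒱) (hU : DiscreteRV U) (hV : DiscreteRV V)
    (hgen : GeneratedBy μ κ (fun ω => f (R ω)) (fun ω => g (S ω)) U V (pair R S)) :
    IsTrivialPair μ (pair R U) (pair S V) :=
  stmt9_general μ κ hκ R S hR hS htriv f g U V hU hV hgen

end SecureComputation
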